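/- Conversely, if S_C(ρ) = S_vN(ρ) for a POVM {Π_i}, then each eigenprojector of ρ is a sum of POVM elements: for each distinct eigenvalue ρ of the density matrix there is an index set I^(ρ) with P_ρ = ∑_{i ∈ I^(ρ)} Π_i, and these index sets partition the full index set. -/

import Mathlib

/-!
Write `q i s = tr (Π_i P_s) ≥ 0` and `p_i = ∑_s q i s * e s = tr (Π_i ρ)`. The difference
`S_C(ρ) - S_vN(ρ)` is `∑_i (∑_s q i s * e s log e s - p_i log (p_i / tr Π_i))`, and each summand is
`c_i ∑_s q i s * klFun (e s / c_i)` with `c_i = p_i / tr Π_i` (when `p_i > 0`), a Kullback–Leibler sum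
that is nonnegative and vanishes only if `e` is constant (`= c_i`) on the support of `q i`. So equality of
the entropies lets each `Π_i` overlap a single eigenprojector `P_(f i)`, since the eigenvalues are
distinct. For positive semidefinite matrices `tr (Π_i P_s) = 0` forces `P_s Π_i = 0`, hence
`P_s = P_s ∑_i Π_i = ∑_(f i = s) Π_i`.
-/

open scoped Matrix ComplexOrder

open Real InformationTheory Finset

section LogSum

variable {ι : Type*} {t : Finset ι} {w x : ι → ℝ}

lemma sum_mul_mul_log_sub_eq_mul_sum_klFun {c : ℝ} (hc : c ≠ 0)
    (hsum : ∑ i ∈ t, w i * x i = c * ∑ i ∈ t, w i) :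
    ∑ i ∈ t, w i * (x i * log (x i)) - (∑ i ∈ t, w i * x i) * log c
      = c * ∑ i ∈ t, w i * klFun (x i / c) := by
  have hterm : ∀ i, c * (w i * klFun (x i / c))
      = w i * (x i * log (x i)) - w i * x i * log c + (c * w i - w i * x i) := fun i => by
    rcases eq_or_ne (x i) 0 with hx | hx
    · simp [hx, klFun_apply]
    · rw [klFun_apply, log_div hx hc]
      field_simp
      ring
  rw [mul_sum, sum_congr rfl fun i _ => hterm i, sum_add_distrib, sum_sub_distrib, sum_sub_distrib,
    ← sum_mul, ← mul_sum, hsum, sub_self, add_zero]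

lemma exists_sum_mul_mul_log_sub_eq_mul_sum_klFun (hw : ∀ i ∈ t, 0 ≤ w i)
    (hwx : ∀ i ∈ t, 0 ≤ w i * x i) (hp : 0 < ∑ i ∈ t, w i * x i) :
    ∃ c > 0, (∀ i ∈ t, 0 ≤ w i * klFun (x i / c)) ∧
      ∑ i ∈ t, w i * (x i * log (x i))
          - (∑ i ∈ t, w i * x i) * log ((∑ i ∈ t, w i * x i) / ∑ i ∈ t, w i)
        = c * ∑ i ∈ t, w i * klFun (x i / c) := by
  have hW : 0 < ∑ i ∈ t, w i := by
    refine (sum_nonneg hw).lt_of_ne fun hW => hp.ne' (sum_eq_zero fun i hi => ?_)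
    rw [(sum_eq_zero_iff_of_nonneg hw).1 hW.symm i hi, zero_mul]
  have hc := div_pos hp hW
  refine ⟨_, hc, fun i hi => ?_,
    sum_mul_mul_log_sub_eq_mul_sum_klFun hc.ne' (div_mul_cancel₀ _ hW.ne').symm⟩
  rcases (hw i hi).eq_or_lt with hwi | hwi
  · rw [← hwi, zero_mul]
  · exact mul_nonneg hwi.le
      (klFun_nonneg (div_nonneg (nonneg_of_mul_nonneg_right (hwx i hi) hwi) hc.le))

lemma eq_zero_of_sum_mul_eq_zero (hwx : ∀ i ∈ t, 0 ≤ w i * x i)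
    (h : ∑ i ∈ t, w i * x i = 0) {i : ι} (hi : i ∈ t) (hwi : w i ≠ 0) : x i = 0 :=
  (mul_eq_zero.1 ((sum_eq_zero_iff_of_nonneg hwx).1 h i hi)).resolve_left hwi

lemma mul_log_div_le_sum_mul_mul_log (hw : ∀ i ∈ t, 0 ≤ w i)
    (hwx : ∀ i ∈ t, 0 ≤ w i * x i) :
    (∑ i ∈ t, w i * x i) * log ((∑ i ∈ t, w i * x i) / ∑ i ∈ t, w i)
      ≤ ∑ i ∈ t, w i * (x i * log (x i)) := by
  rcases (sum_nonneg hwx).eq_or_lt with hp | hp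
  · rw [← hp, zero_mul]
    refine (sum_eq_zero fun i hi => ?_).ge
    rcases eq_or_ne (w i) 0 with hwi | hwi
    · rw [hwi, zero_mul]
    · rw [eq_zero_of_sum_mul_eq_zero hwx hp.symm hi hwi, zero_mul, mul_zero]
  · obtain ⟨c, hc, hterm, hgap⟩ := exists_sum_mul_mul_log_sub_eq_mul_sum_klFun hw hwx hp
    exact sub_nonneg.1 (hgap ▸ mul_nonneg hc.le (sum_nonneg hterm))

lemma eq_of_mul_log_div_eq_sum_mul_mul_log (hw : ∀ i ∈ t, 0 ≤ w i)
    (hwx : ∀ i ∈ t, 0 ≤ w i * x i)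
    (heq : (∑ i ∈ t, w i * x i) * log ((∑ i ∈ t, w i * x i) / ∑ i ∈ t, w i)
      = ∑ i ∈ t, w i * (x i * log (x i)))
    {i j : ι} (hi : i ∈ t) (hj : j ∈ t) (hwi : w i ≠ 0) (hwj : w j ≠ 0) : x i = x j := by
  suffices ∃ c, ∀ k ∈ t, w k ≠ 0 → x k = c by
    obtain ⟨c, hc⟩ := this
    rw [hc i hi hwi, hc j hj hwj]
  rcases (sum_nonneg hwx).eq_or_lt with hp | hp
  · exact ⟨0, fun k hk hwk => eq_zero_of_sum_mul_eq_zero hwx hp.symm hk hwk⟩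
  · obtain ⟨c, hc, hterm, hgap⟩ := exists_sum_mul_mul_log_sub_eq_mul_sum_klFun hw hwx hp
    rw [heq, sub_self, eq_comm, mul_eq_zero, or_iff_right hc.ne', sum_eq_zero_iff_of_nonneg hterm]
      at hgap
    refine ⟨c, fun k hk hwk => ?_⟩
    have hxk : 0 ≤ x k / c := div_nonneg
      (nonneg_of_mul_nonneg_right (hwx k hk) ((hw k hk).lt_of_ne' hwk)) hc.le
    rw [← div_eq_one_iff_eq hc.ne', ← klFun_eq_zero_iff hxk]
    exact (mul_eq_zero.1 (hgap k hk)).resolve_left hwk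

end LogSum

lemma exists_forall_ne_eq_zero_of_sum_mul_log_div_eq {ι σ : Type*} [Fintype ι] [Fintype σ]
    [Nonempty σ] {q : ι → σ → ℝ} {e : σ → ℝ} (he : Function.Injective e)
    (hq : ∀ i s, 0 ≤ q i s) (hqe : ∀ i s, 0 ≤ q i s * e s)
    (heq : ∑ i, (∑ s, q i s * e s) * log ((∑ s, q i s * e s) / ∑ s, q i s)
      = ∑ i, ∑ s, q i s * (e s * log (e s))) :
    ∃ f : ι → σ, ∀ i s, f i ≠ s → q i s = 0 := by
  have hle : ∀ i ∈ univ, (∑ s, q i s * e s) * log ((∑ s, q i s * e s) / ∑ s, q i s)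
      ≤ ∑ s, q i s * (e s * log (e s)) := fun i _ =>
    mul_log_div_le_sum_mul_mul_log (fun s _ => hq i s) (fun s _ => hqe i s)
  have hsupp : ∀ i s t, q i s ≠ 0 → q i t ≠ 0 → s = t := fun i s t hs ht =>
    he (eq_of_mul_log_div_eq_sum_mul_mul_log (fun s _ => hq i s) (fun s _ => hqe i s)
      ((sum_eq_sum_iff_of_le hle).1 heq i (mem_univ i)) (mem_univ s) (mem_univ t) hs ht)
  have hlabel : ∀ i, ∃ s, ∀ t, q i t ≠ 0 → s = t := fun i => by
    by_cases h : ∃ s, q i s ≠ 0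
    · obtain ⟨s, hs⟩ := h
      exact ⟨s, fun t ht => hsupp i s t hs ht⟩
    · push Not at h
      exact ⟨Classical.arbitrary σ, fun t ht => absurd (h t) ht⟩
  choose f hf using hlabel
  exact ⟨f, fun i s hs => by_contra fun h => hs (hf i s h)⟩

lemma OrthogonalIdempotents.sum_smul_mul {R S I : Type*} [CommSemiring S] [Semiring R]
    [Algebra S R] [Fintype I] {P : I → R} (hP : OrthogonalIdempotents P) (c : I → S) (j : I) :
    (∑ i, c i • P i) * P j = c j • P j := by
  classical
  simp [Finset.sum_mul, hP.mul_eq]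

lemma eq_sum_fiber_of_mul_eq_zero {R σ ι : Type*} [Semiring R] [Fintype σ] [Fintype ι]
    [DecidableEq σ] {P : σ → R} {Q : ι → R} (hP : ∑ s, P s = 1) (hQ : ∑ i, Q i = 1)
    (f : ι → σ) (hPQ : ∀ i s, f i ≠ s → P s * Q i = 0) (s : σ) :
    P s = ∑ i ∈ univ.filter (f · = s), Q i := by
  have hQ_absorb : ∀ i, P (f i) * Q i = Q i := fun i => by
    conv_rhs => rw [← one_mul (Q i), ← hP, sum_mul]
    exact (sum_eq_single (f i) (fun t _ ht => hPQ i t (Ne.symm ht)) (by simp)).symm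
  calc P s = ∑ i, P s * Q i := by rw [← mul_sum, hQ, mul_one]
    _ = ∑ i ∈ univ.filter (f · = s), P s * Q i :=
      (sum_filter_of_ne fun i _ h => by_contra fun hi => h (hPQ i s hi)).symm
    _ = ∑ i ∈ univ.filter (f · = s), Q i :=
      sum_congr rfl fun i hi => by rw [← (mem_filter.1 hi).2, hQ_absorb]

namespace Matrix

variable {𝕜 n : Type*} [RCLike 𝕜] [Fintype n]

lemma IsHermitian.posSemidef_of_mul_self_eq {P : Matrix n n 𝕜} (hP : P.IsHermitian)
    (hPP : P * P = P) : P.PosSemidef := by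
  convert posSemidef_conjTranspose_mul_self P using 1
  rw [hP.eq, hPP]

open scoped MatrixOrder in
lemma PosSemidef.trace_mul_nonneg {A B : Matrix n n 𝕜} (hA : A.PosSemidef)
    (hB : B.PosSemidef) : 0 ≤ (A * B).trace := by
  classical
  obtain ⟨D, rfl⟩ := CStarAlgebra.nonneg_iff_eq_star_mul_self.mp hB.nonneg
  rw [star_eq_conjTranspose, ← Matrix.mul_assoc, trace_mul_comm, ← Matrix.mul_assoc]
  exact (hA.mul_mul_conjTranspose_same D).trace_nonneg

open scoped MatrixOrder in
lemma PosSemidef.mul_eq_zero_of_trace_mul_eq_zero {A B : Matrix n n 𝕜} (hA : A.PosSemidef)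
    (hB : B.PosSemidef) (h : (A * B).trace = 0) : A * B = 0 := by
  classical
  obtain ⟨C, rfl⟩ := CStarAlgebra.nonneg_iff_eq_star_mul_self.mp hA.nonneg
  obtain ⟨D, rfl⟩ := CStarAlgebra.nonneg_iff_eq_star_mul_self.mp hB.nonneg
  simp only [star_eq_conjTranspose] at h ⊢
  have hCD : C * Dᴴ = 0 := by
    rw [← trace_conjTranspose_mul_self_eq_zero_iff, ← h, conjTranspose_mul,
      conjTranspose_conjTranspose, Matrix.mul_assoc, trace_mul_comm]
    simp only [Matrix.mul_assoc]
  rw [Matrix.mul_assoc, ← Matrix.mul_assoc C, hCD, Matrix.zero_mul, Matrix.mul_zero]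

lemma trace_eq_sum_trace_mul_right {σ : Type*} [Fintype σ] [DecidableEq n]
    {P : σ → Matrix n n 𝕜} (hP : ∑ s, P s = 1) (A : Matrix n n 𝕜) :
    A.trace = ∑ s, (A * P s).trace := by
  rw [← trace_sum, ← mul_sum, hP, Matrix.mul_one]

lemma trace_eq_sum_trace_mul_left {ι : Type*} [Fintype ι] [DecidableEq n]
    {Q : ι → Matrix n n 𝕜} (hQ : ∑ i, Q i = 1) (A : Matrix n n 𝕜) :
    A.trace = ∑ i, (Q i * A).trace := by
  rw [← trace_sum, ← sum_mul, hQ, Matrix.one_mul]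

lemma re_trace_mul_sum_smul {σ : Type*} [Fintype σ] (A : Matrix n n ℂ) (e : σ → ℝ)
    (P : σ → Matrix n n ℂ) :
    (A * ∑ s, (e s : ℂ) • P s).trace.re = ∑ s, (A * P s).trace.re * e s := by
  simp [Matrix.mul_sum, trace_sum, mul_comm]

lemma eq_sum_fiber_of_trace_mul_eq_zero {ι σ : Type*} [Fintype ι] [Fintype σ] [DecidableEq σ]
    [DecidableEq n] {P : σ → Matrix n n 𝕜} {Q : ι → Matrix n n 𝕜} (hP : ∀ s, (P s).PosSemidef)
    (hQ : ∀ i, (Q i).PosSemidef) (hPsum : ∑ s, P s = 1) (hQsum : ∑ i, Q i = 1) (f : ι → σ)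
    (htr : ∀ i s, f i ≠ s → (Q i * P s).trace = 0) (s : σ) :
    P s = ∑ i ∈ univ.filter (f · = s), Q i :=
  eq_sum_fiber_of_mul_eq_zero hPsum hQsum f (fun i s hs => (hP s).mul_eq_zero_of_trace_mul_eq_zero
    (hQ i) (by rw [trace_mul_comm]; exact htr i s hs)) s

end Matrix

/-- Converse: if observational entropy of a POVM `{Q i}` equals the von Neumann entropy,
then each eigenprojector of `ρ` is the sum of the POVM elements over a block of a
partition of the index set (the partition is given by a function `f` assigning to each
index its eigenvalue label). -/
theorem refinement_of_obs_entropy_eq_vN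
    {n ι σ : Type*} [Fintype n] [DecidableEq n] [Fintype ι] [Fintype σ] [DecidableEq σ]
    (ρ : Matrix n n ℂ) (hρ : ρ.PosSemidef) (hρ1 : ρ.trace = 1)
    (e : σ → ℝ) (he : Function.Injective e)
    (P : σ → Matrix n n ℂ)
    (hherm : ∀ s, (P s).IsHermitian)
    (hproj : ∀ s, P s * P s = P s)
    (horth : ∀ s t, s ≠ t → P s * P t = 0)
    (hcomp : ∑ s, P s = 1)
    (hspec : ρ = ∑ s, (e s : ℂ) • P s)
    (Q : ι → Matrix n n ℂ) (hQ : ∀ i, (Q i).PosSemidef) (hQsum : ∑ i, Q i = 1)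
    (heq : -∑ i, (Q i * ρ).trace.re * Real.log ((Q i * ρ).trace.re / (Q i).trace.re)
      = -∑ s, (P s).trace.re * (e s * Real.log (e s))) :
    ∃ f : ι → σ, ∀ s, P s = ∑ i ∈ Finset.univ.filter (f · = s), Q i := by
  have hP : ∀ s, (P s).PosSemidef := fun s => (hherm s).posSemidef_of_mul_self_eq (hproj s)
  have hQP_nonneg : ∀ i s, 0 ≤ (Q i * P s).trace := fun i s => (hQ i).trace_mul_nonneg (hP s)
  set q : ι → σ → ℝ := fun i s => (Q i * P s).trace.re
  -- `P s * ρ * P s = e s • P s` is positive semidefinite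
  have hqe : ∀ i s, 0 ≤ q i s * e s := fun i s => by
    have hPρP := hρ.conjTranspose_mul_mul_same (P s)
    rw [(hherm s).eq, Matrix.mul_assoc, hspec, OrthogonalIdempotents.sum_smul_mul ⟨hproj, horth⟩,
      Matrix.mul_smul, hproj] at hPρP
    have := (Complex.nonneg_iff.1 ((hQ i).trace_mul_nonneg hPρP)).1
    rwa [Matrix.mul_smul, Matrix.trace_smul, smul_eq_mul, Complex.re_ofReal_mul, mul_comm] at this
  have : Nonempty σ := by
    by_contra h
    rw [not_nonempty_iff] at h
    simp [hspec] at hρ1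
  obtain ⟨f, hf⟩ := exists_forall_ne_eq_zero_of_sum_mul_log_div_eq he
    (fun i s => (Complex.nonneg_iff.1 (hQP_nonneg i s)).1) hqe <| calc
      _ = ∑ i, (Q i * ρ).trace.re * log ((Q i * ρ).trace.re / (Q i).trace.re) := by
        simp only [hspec, Matrix.re_trace_mul_sum_smul,
          Matrix.trace_eq_sum_trace_mul_right hcomp (Q _), Complex.re_sum]
      _ = ∑ s, (P s).trace.re * (e s * log (e s)) := neg_inj.1 heq
      _ = ∑ i, ∑ s, q i s * (e s * log (e s)) := by
        simp only [Matrix.trace_eq_sum_trace_mul_left hQsum (P _), Complex.re_sum, sum_mul]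
        exact sum_comm
  exact ⟨f, Matrix.eq_sum_fiber_of_trace_mul_eq_zero hP hQ hcomp hQsum f fun i s hs =>
    Complex.ext (hf i s hs) (Complex.nonneg_iff.1 (hQP_nonneg i s)).2.symm⟩
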